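/- Let R be a PVMD and P a t-prime ideal of R that is not t-maximal. Then T(P) ⊊ Ω(P) if and only if P = (P²)_t and P = √I for some t-invertible ideal I of R. -/

import Mathlib

/-!
Common definitions: star operations (`v`- and `t`-closure), `t`-ideals, `t`-invertibility,
PVMDs, overrings, `t`-linked and `t`-flat overrings, localizations inside the quotient
field, Nagata and Kaplansky transforms, endomorphism rings of ideals.
-/

open scoped Classical

namespace PVMDPaper

noncomputable section

section Generic

variable (A : Type*) [CommRing A] (K : Type*) [Field K] [Algebra A K]

/-- The image of an integral ideal of `A` inside the field `K`, as an `A`-submodule of `K`. -/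
def toK (I : Ideal A) : Submodule A K := Submodule.map (Algebra.linearMap A K) I

variable {A K}

/-- The dual `I⁻¹ = (A : I) = {x ∈ K : x I ⊆ A}` of a submodule of `K`. -/
def dual (I : Submodule A K) : Submodule A K := 1 / I

/-- The `v`-closure `I_v = (I⁻¹)⁻¹`. -/
def vOp (I : Submodule A K) : Submodule A K := 1 / (1 / I)

/-- The `t`-closure `I_t`: the union of `J_v` where `J` ranges over the nonzero finitely
generated submodules `J ≤ I` (the union of this directed family is its supremum). -/
def tOp (I : Submodule A K) : Submodule A K :=
  sSup {V | ∃ J : Submodule A K, J ≠ ⊥ ∧ J.FG ∧ J ≤ I ∧ V = vOp J}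

variable (K)

/-- An (integral) ideal `I` of `A` is a `t`-ideal if `I = I_t`. -/
def IsTIdeal (I : Ideal A) : Prop := tOp (toK A K I) = toK A K I

/-- An ideal `I` is `t`-invertible if `(I I⁻¹)_t = A`. -/
def IsTInvertible (I : Ideal A) : Prop := tOp (toK A K I * dual (toK A K I)) = 1

/-- A `t`-maximal ideal: an ideal maximal in the set of proper integral `t`-ideals. -/
def IsTMaximal (M : Ideal A) : Prop :=
  M ≠ ⊤ ∧ IsTIdeal K M ∧ ∀ J : Ideal A, J ≠ ⊤ → IsTIdeal K J → M ≤ J → J = M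

variable (A)

/-- `A` is a Prüfer `v`-multiplication domain: every nonzero finitely generated ideal
is `t`-invertible. -/
def IsPVMD : Prop := ∀ I : Ideal A, I ≠ ⊥ → I.FG → IsTInvertible K I

/-- `Spec_t(A)` is Noetherian: the ascending chain condition on radical `t`-ideals. -/
def TSpecNoetherian : Prop :=
  ∀ f : ℕ →o Ideal A, (∀ n, IsTIdeal K (f n) ∧ (f n).radical = f n) →
    ∃ n, ∀ m, n ≤ m → f m = f n

variable {A K}

/-- A submodule of `K` is a subring of `K` iff it contains `1` and is closed under
multiplication (being an additive subgroup already). -/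
def IsSubringOf (S : Submodule A K) : Prop :=
  (1 : K) ∈ S ∧ ∀ x ∈ S, ∀ y ∈ S, x * y ∈ S

variable (K)

/-- The localization `A_P = {a/s : a ∈ A, s ∈ A ∖ P}` viewed as a subset of `K`. -/
def loc (P : Ideal A) : Set K :=
  {x | ∃ a s : A, s ∉ P ∧ x * algebraMap A K s = algebraMap A K a}

/-- The set `J A_P = {a/s : a ∈ J, s ∈ A ∖ P} ⊆ K`. -/
def locIdealAt (J P : Ideal A) : Set K :=
  {x | ∃ a ∈ J, ∃ s : A, s ∉ P ∧ x * algebraMap A K s = algebraMap A K a}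

/-- `Z(A, I)`: the set of zero divisors on `A/I`. -/
def ZSet (I : Ideal A) : Set A := {x | ∃ a : A, a ∉ I ∧ x * a ∈ I}

/-- `Q` is a maximal prime ideal of `Z(A,I)`: a prime contained in `Z(A,I)`, maximal
(under inclusion) among the primes contained in `Z(A,I)`. -/
def MaxPrimeOfZ (I Q : Ideal A) : Prop :=
  Q.IsPrime ∧ (Q : Set A) ⊆ ZSet I ∧
    ∀ Q' : Ideal A, Q'.IsPrime → (Q' : Set A) ⊆ ZSet I → Q ≤ Q' → Q' = Q

end Generic

section Overring

variable {R : Type*} [CommRing R] [IsDomain R]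
variable {K : Type*} [Field K] [Algebra R K] [IsFractionRing R K]

/-- The extension `IT` of an ideal `I` of `R` to an overring `T`, as a `T`-submodule of `K`. -/
def extendI (I : Ideal R) (T : Subalgebra R K) : Submodule T K :=
  Submodule.span T (algebraMap R K '' (I : Set R))

/-- The extension `IT` of an `R`-submodule `I` of `K` to an overring `T`. -/
def extendS (I : Submodule R K) (T : Subalgebra R K) : Submodule T K :=
  Submodule.span T (I : Set K)

/-- An overring `T` of `R` is `t`-linked over `R` if `(IT)⁻¹ = T` for each finitely
generated ideal `I` of `R` with `I⁻¹ = R`. -/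
def IsTLinked (T : Subalgebra R K) : Prop :=
  ∀ I : Ideal R, I.FG → dual (toK R K I) = 1 → dual (extendI I T) = 1

/-- An overring `T` of `R` is `t`-flat over `R` if `T_M = R_{M ∩ R}` for each
`t`-maximal ideal `M` of `T`. -/
def IsTFlat (T : Subalgebra R K) : Prop :=
  ∀ M : Ideal T, IsTMaximal K M → loc K M = loc K (M.comap (algebraMap R T))

variable (R K)

/-- `R` is a `tQR`-domain: a PVMD all of whose `t`-linked overrings are localizations
of `R` at multiplicative sets. -/
def IsTQR : Prop :=
  IsPVMD R K ∧ ∀ T : Subalgebra R K, IsTLinked T → ∃ S : Submonoid R,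
    (T : Set K) = {x | ∃ a : R, ∃ s ∈ S, x * algebraMap R K s = algebraMap R K a}

variable {R K}
variable (K)

/-- The endomorphism ring `(I : I) = {x ∈ K : x I ⊆ I}` of an ideal `I`, as an
overring of `R`. -/
def endoRing (I : Ideal R) : Subalgebra R K where
  carrier := {x : K | ∀ y ∈ toK R K I, x * y ∈ toK R K I}
  mul_mem' := by
    intro a b ha hb y hy
    rw [mul_assoc]
    exact ha _ (hb _ hy)
  one_mem' := by
    intro y hy
    rwa [one_mul]
  add_mem' := by
    intro a b ha hb y hy
    rw [add_mul]
    exact Submodule.add_mem _ (ha y hy) (hb y hy)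
  zero_mem' := by
    intro y hy
    rw [zero_mul]
    exact Submodule.zero_mem _
  algebraMap_mem' := by
    intro r y hy
    rw [← Algebra.smul_def]
    exact Submodule.smul_mem _ r hy

set_option synthInstance.maxHeartbeats 400000 in
/-- The ideal `I`, viewed as an ideal of its endomorphism ring `(I : I)`. -/
def idealInEndo (I : Ideal R) : Ideal (endoRing K I) where
  carrier := {x | (x : K) ∈ toK R K I}
  add_mem' := by
    intro a b ha hb
    simp only [Set.mem_setOf_eq] at *
    rw [AddMemClass.coe_add]
    exact Submodule.add_mem _ ha hb
  zero_mem' := by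
    simp only [Set.mem_setOf_eq, ZeroMemClass.coe_zero]
    exact Submodule.zero_mem _
  smul_mem' := by
    intro c x hx
    simp only [Set.mem_setOf_eq] at *
    rw [smul_eq_mul, MulMemClass.coe_mul]
    exact c.2 _ hx

/-- The Kaplansky transform `Ω(I) = {u ∈ K : ∀ a ∈ I, ∃ n ≥ 1, u aⁿ ∈ R}`, as an
overring of `R`. -/
def kaplansky (I : Ideal R) : Subalgebra R K where
  carrier := {u : K | ∀ a ∈ I, ∃ n : ℕ, 0 < n ∧
    ∃ r : R, u * (algebraMap R K a) ^ n = algebraMap R K r}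
  mul_mem' := by
    intro u v hu hv a ha
    obtain ⟨n, hn, r, hr⟩ := hu a ha
    obtain ⟨m, hm, s, hs⟩ := hv a ha
    refine ⟨n + m, by omega, r * s, ?_⟩
    rw [map_mul, ← hr, ← hs, pow_add]
    ring
  one_mem' := by
    intro a ha
    exact ⟨1, one_pos, a, by rw [pow_one, one_mul]⟩
  add_mem' := by
    intro u v hu hv a ha
    obtain ⟨n, hn, r, hr⟩ := hu a ha
    obtain ⟨m, hm, s, hs⟩ := hv a ha
    refine ⟨n + m, by omega, r * a ^ m + s * a ^ n, ?_⟩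
    rw [map_add, map_mul, map_mul, map_pow, map_pow, ← hr, ← hs, pow_add, add_mul]
    ring
  zero_mem' := by
    intro a ha
    exact ⟨1, one_pos, 0, by rw [map_zero, zero_mul]⟩
  algebraMap_mem' := by
    intro r a ha
    exact ⟨1, one_pos, r * a, by rw [map_mul, pow_one]⟩

/-- The Nagata (ideal) transform `T(I) = ⋃_{n ≥ 1} (R : Iⁿ)`, as an overring of `R`. -/
def nagata (I : Ideal R) : Subalgebra R K where
  carrier := {x : K | ∃ n : ℕ, ∀ y ∈ I ^ (n + 1),
    ∃ r : R, x * algebraMap R K y = algebraMap R K r}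
  mul_mem' := by
    intro x x' hx hx'
    obtain ⟨n, hn⟩ := hx
    obtain ⟨m, hm⟩ := hx'
    refine ⟨n + m + 1, fun y hy => ?_⟩
    rw [show n + m + 1 + 1 = (n + 1) + (m + 1) by omega, pow_add] at hy
    refine Submodule.mul_induction_on hy ?_ ?_
    · intro a ha b hb
      obtain ⟨r, hr⟩ := hn a ha
      obtain ⟨s, hs⟩ := hm b hb
      refine ⟨r * s, ?_⟩
      rw [map_mul, map_mul, ← hr, ← hs]
      ring
    · rintro y1 y2 ⟨r1, h1⟩ ⟨r2, h2⟩
      exact ⟨r1 + r2, by rw [map_add, map_add, mul_add, h1, h2]⟩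
  one_mem' := ⟨0, fun y _ => ⟨y, by rw [one_mul]⟩⟩
  add_mem' := by
    intro x x' hx hx'
    obtain ⟨n, hn⟩ := hx
    obtain ⟨m, hm⟩ := hx'
    refine ⟨n + m + 1, fun y hy => ?_⟩
    have h1 : y ∈ I ^ (n + 1) := Ideal.pow_le_pow_right (by omega) hy
    have h2 : y ∈ I ^ (m + 1) := Ideal.pow_le_pow_right (by omega) hy
    obtain ⟨r, hr⟩ := hn y h1
    obtain ⟨s, hs⟩ := hm y h2
    exact ⟨r + s, by rw [map_add, add_mul, hr, hs]⟩
  zero_mem' := ⟨0, fun y _ => ⟨0, by rw [map_zero, zero_mul]⟩⟩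
  algebraMap_mem' := by
    intro r
    exact ⟨0, fun y _ => ⟨r * y, by rw [map_mul]⟩⟩

end Overring

/-!
For `u ∈ K` let `B = (R :_R u)`. Then `u ∈ Ω(P)` iff `P ⊆ √B`, and `u ∈ T(P)` iff `Pⁿ ⊆ B` for
some `n ≥ 1`; moreover `B = (R + Ru)⁻¹` is a `t`-invertible `t`-ideal. At every `t`-maximal ideal
`M` of a PVMD, `R_M` is a valuation domain, and membership in a `t`-ideal can be checked in all
these localizations.

If `u ∈ Ω(P) \ T(P)`, then `P ⊄ B`. If `√B ≠ P`, pick `t ∈ √B \ P`: the valuation property gives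
`P ⊆ tᵏ R_M ⊆ B R_M` for every `t`-maximal `M ⊇ B`, so `P ⊆ B_t = B`. If `x ∈ P \ (P²)_t`, then
`xs ∉ P²` for all `s ∉ P`, so `P² ⊆ x R_M` for every `t`-maximal `M ⊇ P`; with `xᵏ ∈ B` this
gives `P^(2k) ⊆ B`. Conversely, if `P = (P²)_t` then `(R : Pⁿ) = P⁻¹` for all `n ≥ 1` and `P` is
not `t`-invertible, so `P⁻¹ ⊊ I⁻¹`, and any `u ∈ I⁻¹ \ P⁻¹` lies in `Ω(P) \ T(P)`.
-/

section Closure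

variable {R K : Type*} [CommRing R] [Field K] [Algebra R K] {X Y J : Submodule R K}

lemma mem_dual {x : K} : x ∈ dual X ↔ ∀ y ∈ X, x * y ∈ (1 : Submodule R K) :=
  Submodule.mem_div_iff_forall_mul_mem

lemma le_dual_iff : Y ≤ dual X ↔ Y * X ≤ 1 := Submodule.le_div_iff_mul_le

lemma dual_mul_le_one (X : Submodule R K) : dual X * X ≤ 1 := le_dual_iff.mp le_rfl

lemma mul_dual_le_one (X : Submodule R K) : X * dual X ≤ 1 := by
  rw [mul_comm]
  exact dual_mul_le_one X

lemma dual_anti (h : X ≤ Y) : dual Y ≤ dual X :=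
  le_dual_iff.mpr ((mul_le_mul_right h _).trans (dual_mul_le_one Y))

lemma vOp_eq_dual_dual (X : Submodule R K) : vOp X = dual (dual X) := rfl

lemma le_vOp (X : Submodule R K) : X ≤ vOp X := le_dual_iff.mpr (mul_dual_le_one X)

lemma vOp_mono (h : X ≤ Y) : vOp X ≤ vOp Y := dual_anti (dual_anti h)

lemma dual_vOp (X : Submodule R K) : dual (vOp X) = dual X :=
  le_antisymm (dual_anti (le_vOp X)) (le_vOp (dual X))

lemma vOp_vOp (X : Submodule R K) : vOp (vOp X) = vOp X := congrArg dual (dual_vOp X)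

lemma dual_one : dual (1 : Submodule R K) = 1 := by
  refine le_antisymm (fun x hx => ?_) (le_dual_iff.mpr (one_mul _).le)
  have h := mem_dual.mp hx 1 (Submodule.one_le.mp le_rfl)
  rwa [mul_one] at h

lemma vOp_one : vOp (1 : Submodule R K) = 1 := by
  rw [vOp_eq_dual_dual, dual_one, dual_one]

lemma mul_vOp_le (X Y : Submodule R K) : X * vOp Y ≤ vOp (X * Y) := by
  have h : X * dual (X * Y) ≤ dual Y := le_dual_iff.mpr <| by
    rw [mul_right_comm]
    exact mul_dual_le_one (X * Y)
  refine le_dual_iff.mpr ?_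
  calc X * vOp Y * dual (X * Y) = vOp Y * (X * dual (X * Y)) := by ring
    _ ≤ vOp Y * dual Y := mul_le_mul_right h _
    _ ≤ 1 := dual_mul_le_one (dual Y)

lemma span_singleton_inv_mul {c : K} (hc : c ≠ 0) :
    Submodule.span R {c⁻¹} * Submodule.span R {c} = 1 := by
  rw [Submodule.span_mul_span, Set.singleton_mul_singleton, inv_mul_cancel₀ hc,
    Submodule.one_eq_span]

lemma dual_span_singleton_mul {c : K} (hc : c ≠ 0) (X : Submodule R K) :
    dual (Submodule.span R {c} * X) = Submodule.span R {c⁻¹} * dual X := by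
  refine le_antisymm ?_ (le_dual_iff.mpr ?_)
  · have h : Submodule.span R {c} * dual (Submodule.span R {c} * X) ≤ dual X :=
      le_dual_iff.mpr (by rw [mul_right_comm]; exact mul_dual_le_one _)
    calc dual (Submodule.span R {c} * X)
        = Submodule.span R {c⁻¹} * (Submodule.span R {c} * dual (Submodule.span R {c} * X)) := by
          rw [← mul_assoc, span_singleton_inv_mul hc, one_mul]
      _ ≤ Submodule.span R {c⁻¹} * dual X := mul_le_mul_right h _
  · calc Submodule.span R {c⁻¹} * dual X * (Submodule.span R {c} * X)
        = Submodule.span R {c⁻¹} * Submodule.span R {c} * (dual X * X) := by ring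
      _ ≤ 1 := by rw [span_singleton_inv_mul hc, one_mul]; exact dual_mul_le_one X

lemma span_singleton_mul_ne_bot {c : K} (hc : c ≠ 0) (hX : X ≠ ⊥) :
    Submodule.span R {c} * X ≠ ⊥ := by
  obtain ⟨x, hx, hx0⟩ := Submodule.exists_mem_ne_zero_of_ne_bot hX
  refine Submodule.ne_bot_iff _ |>.mpr ⟨c * x, ?_, mul_ne_zero hc hx0⟩
  exact Submodule.mul_mem_mul (Submodule.mem_span_singleton_self c) hx

lemma vOp_le_tOp (hJ : J ≠ ⊥) (hfg : J.FG) (hle : J ≤ X) : vOp J ≤ tOp X :=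
  le_sSup ⟨J, hJ, hfg, hle, rfl⟩

lemma tOp_bot : tOp (⊥ : Submodule R K) = ⊥ :=
  sSup_eq_bot.mpr <| by
    rintro _ ⟨J, hJ, -, hle, rfl⟩
    exact absurd (le_bot_iff.mp hle) hJ

lemma tOp_le_vOp (X : Submodule R K) : tOp X ≤ vOp X :=
  sSup_le <| by
    rintro _ ⟨J, -, -, hle, rfl⟩
    exact vOp_mono hle

lemma le_tOp (X : Submodule R K) : X ≤ tOp X := by
  intro x hx
  obtain rfl | hx0 := eq_or_ne x 0
  · exact zero_mem _
  refine vOp_le_tOp (by simpa using hx0) (Submodule.fg_span_singleton x)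
    (Submodule.span_singleton_le_iff_mem _ _ |>.mpr hx) (le_vOp _ ?_)
  exact Submodule.mem_span_singleton_self x

lemma tOp_mono (h : X ≤ Y) : tOp X ≤ tOp Y :=
  sSup_le_sSup <| by
    rintro _ ⟨J, hJ, hfg, hle, rfl⟩
    exact ⟨J, hJ, hfg, hle.trans h, rfl⟩

lemma tOp_vOp (X : Submodule R K) : tOp (vOp X) = vOp X :=
  le_antisymm ((tOp_le_vOp _).trans (vOp_vOp X).le) (le_tOp _)

lemma vOp_dual (X : Submodule R K) : vOp (dual X) = dual X := dual_vOp X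

lemma tOp_dual (X : Submodule R K) : tOp (dual X) = dual X := by
  have h := tOp_vOp (dual X)
  rwa [vOp_dual] at h

lemma dual_tOp (X : Submodule R K) : dual (tOp X) = dual X :=
  le_antisymm (dual_anti (le_tOp X)) ((dual_vOp X).symm.le.trans (dual_anti (tOp_le_vOp X)))

lemma tOp_one : tOp (1 : Submodule R K) = 1 :=
  le_antisymm ((tOp_le_vOp 1).trans vOp_one.le) (le_tOp 1)

lemma tOp_mul_dual_le_one (X : Submodule R K) : tOp (X * dual X) ≤ 1 :=
  tOp_one (R := R) (K := K) ▸ tOp_mono (mul_dual_le_one X)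

lemma directedOn_vOp_fg (X : Submodule R K) :
    DirectedOn (· ≤ ·) {V | ∃ J : Submodule R K, J ≠ ⊥ ∧ J.FG ∧ J ≤ X ∧ V = vOp J} := by
  rintro _ ⟨J₁, hJ₁, hfg₁, hle₁, rfl⟩ _ ⟨J₂, -, hfg₂, hle₂, rfl⟩
  refine ⟨vOp (J₁ ⊔ J₂), ⟨J₁ ⊔ J₂, ?_, hfg₁.sup hfg₂, sup_le hle₁ hle₂, rfl⟩,
    vOp_mono le_sup_left, vOp_mono le_sup_right⟩
  exact fun h => hJ₁ (eq_bot_mono le_sup_left h)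

lemma tOp_sSup_of_directed {F : Set (Submodule R K)} (hdir : DirectedOn (· ≤ ·) F)
    (hF : ∀ X ∈ F, tOp X = X) : tOp (sSup F) = sSup F := by
  rcases F.eq_empty_or_nonempty with rfl | hne
  · rw [sSup_empty, tOp_bot]
  refine le_antisymm (sSup_le ?_) (le_tOp _)
  rintro _ ⟨J, hJ, hfg, hle, rfl⟩
  obtain ⟨X, hX, hJX⟩ := (CompleteLattice.isCompactElement_iff_le_of_directed_sSup_le _ J).mp
    ((Submodule.fg_iff_compact J).mp hfg) F hne hdir hle
  calc vOp J ≤ tOp X := vOp_le_tOp hJ hfg hJX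
    _ = X := hF X hX
    _ ≤ sSup F := le_sSup hX

lemma tOp_tOp (X : Submodule R K) : tOp (tOp X) = tOp X :=
  tOp_sSup_of_directed (directedOn_vOp_fg X) (by rintro _ ⟨J, -, -, -, rfl⟩; exact tOp_vOp J)

lemma mul_tOp_le (X Y : Submodule R K) : X * tOp Y ≤ tOp (X * Y) := by
  refine Submodule.mul_le.mpr fun x hx y hy => ?_
  obtain rfl | hx0 := eq_or_ne x 0
  · rw [zero_mul]
    exact zero_mem _
  suffices tOp Y ≤ (tOp (X * Y)).comap (LinearMap.mulLeft R x) from this hy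
  refine sSup_le ?_
  rintro _ ⟨J, hJ, hfg, hle, rfl⟩ z hz
  have hxX : Submodule.span R {x} ≤ X := (Submodule.span_singleton_le_iff_mem _ _).mpr hx
  exact vOp_le_tOp (span_singleton_mul_ne_bot hx0 hJ) ((Submodule.fg_span_singleton x).mul hfg)
    (mul_le_mul' hxX hle)
    (mul_vOp_le _ _ (Submodule.mul_mem_mul (Submodule.mem_span_singleton_self x) hz))

lemma tOp_mul_tOp_right (X Y : Submodule R K) : tOp (X * tOp Y) = tOp (X * Y) :=
  le_antisymm ((tOp_mono (mul_tOp_le X Y)).trans (tOp_tOp _).le)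
    (tOp_mono (mul_le_mul_right (le_tOp Y) X))

lemma tOp_mul_tOp_left (X Y : Submodule R K) : tOp (tOp X * Y) = tOp (X * Y) := by
  rw [mul_comm, tOp_mul_tOp_right, mul_comm]

end Closure

section Localization

variable {R K : Type*} [CommRing R] [Field K] [Algebra R K]
  {S : Submonoid R} {X Y : Submodule R K}

/-- `X R_S`, the extension of `X` to the localization `R_S`, inside `K`. -/
def localized (S : Submonoid R) (X : Submodule R K) : Submodule R K where
  carrier := {x | ∃ s ∈ S, x * algebraMap R K s ∈ X}
  add_mem' := by
    rintro x y ⟨s, hs, hxs⟩ ⟨t, ht, hyt⟩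
    refine ⟨s * t, S.mul_mem hs ht, ?_⟩
    have h : (x + y) * algebraMap R K (s * t) =
        t • (x * algebraMap R K s) + s • (y * algebraMap R K t) := by
      simp only [map_mul, Algebra.smul_def]
      ring
    rw [h]
    exact add_mem (X.smul_mem t hxs) (X.smul_mem s hyt)
  zero_mem' := ⟨1, S.one_mem, by rw [zero_mul]; exact X.zero_mem⟩
  smul_mem' := by
    rintro r x ⟨s, hs, hxs⟩
    exact ⟨s, hs, by rw [smul_mul_assoc]; exact X.smul_mem r hxs⟩

lemma le_localized (S : Submonoid R) (X : Submodule R K) : X ≤ localized S X :=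
  fun x hx => ⟨1, S.one_mem, by rwa [map_one, mul_one]⟩

lemma localized_mono (h : X ≤ Y) : localized S X ≤ localized S Y :=
  fun _ ⟨s, hs, hxs⟩ => ⟨s, hs, h hxs⟩

lemma localized_mul_localized_le : localized S X * localized S Y ≤ localized S (X * Y) :=
  Submodule.mul_le.mpr fun x ⟨s, hs, hx⟩ y ⟨t, ht, hy⟩ =>
    ⟨s * t, S.mul_mem hs ht, by rw [map_mul, mul_mul_mul_comm]; exact Submodule.mul_mem_mul hx hy⟩

lemma mul_localized_le : X * localized S Y ≤ localized S (X * Y) :=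
  (mul_le_mul_left (le_localized S X) _).trans localized_mul_localized_le

lemma pow_le_span_pow_mul_localized {c : K} (h : X ≤ Submodule.span R {c} * localized S 1)
    (k : ℕ) : X ^ k ≤ Submodule.span R {c ^ k} * localized S 1 := by
  induction k with
  | zero =>
    rw [pow_zero, pow_zero, ← Submodule.one_eq_span, one_mul]
    exact le_localized S 1
  | succ k ih =>
    have hmul : localized S (1 : Submodule R K) * localized S 1 ≤ localized S 1 := by
      simpa only [mul_one] using localized_mul_localized_le (S := S) (X := 1) (Y := 1)
    calc X ^ (k + 1) = X ^ k * X := pow_succ X k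
      _ ≤ Submodule.span R {c ^ k} * localized S 1 * (Submodule.span R {c} * localized S 1) :=
        mul_le_mul' ih h
      _ = Submodule.span R {c ^ k} * Submodule.span R {c} * (localized S 1 * localized S 1) := by
        ring
      _ ≤ Submodule.span R {c ^ (k + 1)} * localized S 1 := by
        rw [Submodule.span_mul_span, Set.singleton_mul_singleton, ← pow_succ]
        exact mul_le_mul_right hmul _

end Localization

section IdealsInK

variable {R K : Type*} [CommRing R] [Field K] [Algebra R K] {I J M : Ideal R}

lemma mem_toK {x : K} : x ∈ toK R K I ↔ ∃ i ∈ I, algebraMap R K i = x := Submodule.mem_map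

lemma algebraMap_mem_toK {r : R} (hr : r ∈ I) : algebraMap R K r ∈ toK R K I := ⟨r, hr, rfl⟩

lemma toK_mono (h : I ≤ J) : toK R K I ≤ toK R K J := Submodule.map_mono h

lemma toK_le_one (I : Ideal R) : toK R K I ≤ 1 := by
  rintro _ ⟨i, -, rfl⟩
  exact Submodule.mem_one.mpr ⟨i, rfl⟩

lemma toK_mul (I J : Ideal R) : toK R K (I * J) = toK R K I * toK R K J :=
  Submodule.map_mul I J (Algebra.ofId R K)

lemma toK_pow (I : Ideal R) (n : ℕ) : toK R K (I ^ n) = toK R K I ^ n :=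
  Submodule.map_pow I (Algebra.ofId R K) n

lemma toK_comap {X : Submodule R K} (h : X ≤ 1) :
    toK R K (X.comap (Algebra.linearMap R K)) = X := by
  rw [toK, Submodule.map_comap_eq, ← Submodule.one_eq_range, inf_eq_right.mpr h]

/-- `(R :_R u)`, the ideal of denominators of `u`. -/
def denIdeal (u : K) : Ideal R := (1 : Submodule R K).colon {u}

lemma mem_denIdeal {u : K} {r : R} :
    r ∈ denIdeal u ↔ u * algebraMap R K r ∈ (1 : Submodule R K) := by
  rw [denIdeal, Submodule.mem_colon_singleton, Algebra.smul_def, mul_comm]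

lemma mem_dual_span_one_pair {u x : K} :
    x ∈ dual (Submodule.span R {1, u}) ↔ x ∈ (1 : Submodule R K) ∧ x * u ∈ (1 : Submodule R K) := by
  rw [mem_dual]
  refine ⟨fun h => ⟨?_, h u (Submodule.subset_span (by simp))⟩, fun ⟨h1, hu⟩ y hy => ?_⟩
  · simpa using h 1 (Submodule.subset_span (by simp))
  obtain ⟨a, b, rfl⟩ := Submodule.mem_span_pair.mp hy
  rw [mul_add, mul_smul_comm, mul_smul_comm, mul_one]
  exact add_mem (Submodule.smul_mem _ a h1) (Submodule.smul_mem _ b hu)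

lemma toK_denIdeal (u : K) : toK R K (denIdeal u) = dual (Submodule.span R {1, u}) := by
  ext x
  rw [mem_toK, mem_dual_span_one_pair]
  constructor
  · rintro ⟨r, hr, rfl⟩
    exact ⟨Submodule.mem_one.mpr ⟨r, rfl⟩, by rw [mul_comm]; exact mem_denIdeal.mp hr⟩
  · rintro ⟨h1, hu⟩
    obtain ⟨r, rfl⟩ := Submodule.mem_one.mp h1
    exact ⟨r, mem_denIdeal.mpr (by rwa [mul_comm]), rfl⟩

lemma isTIdeal_denIdeal (u : K) : IsTIdeal K (denIdeal (R := R) u) := by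
  rw [IsTIdeal, toK_denIdeal, tOp_dual]

lemma mem_dual_toK_iff {u : K} : u ∈ dual (toK R K I) ↔ I ≤ denIdeal u := by
  rw [mem_dual]
  refine ⟨fun h i hi => mem_denIdeal.mpr (h _ (algebraMap_mem_toK hi)), ?_⟩
  rintro h _ ⟨i, hi, rfl⟩
  exact mem_denIdeal.mp (h hi)

lemma mem_kaplansky_iff {P : Ideal R} {u : K} : u ∈ kaplansky K P ↔ P ≤ (denIdeal u).radical := by
  refine ⟨fun hu a ha => ?_, fun h a ha => ?_⟩
  · obtain ⟨n, -, r, hr⟩ := hu a ha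
    exact ⟨n, mem_denIdeal.mpr (Submodule.mem_one.mpr ⟨r, by rw [map_pow, hr]⟩)⟩
  · obtain ⟨n, hn⟩ := h ha
    obtain ⟨r, hr⟩ := Submodule.mem_one.mp (mem_denIdeal.mp (Ideal.mul_mem_left _ a hn))
    exact ⟨n + 1, n.succ_pos, r, by rw [← map_pow, pow_succ', hr]⟩

lemma mem_nagata_iff {P : Ideal R} {u : K} :
    u ∈ nagata K P ↔ ∃ n : ℕ, P ^ (n + 1) ≤ denIdeal u := by
  refine exists_congr fun n => forall₂_congr fun y _ => ?_
  rw [mem_denIdeal, Submodule.mem_one]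
  exact exists_congr fun r => eq_comm

lemma nagata_subset_kaplansky (P : Ideal R) : (nagata K P : Set K) ⊆ kaplansky K P := by
  intro u hu
  obtain ⟨n, hn⟩ := mem_nagata_iff.mp hu
  exact mem_kaplansky_iff.mpr fun a ha => ⟨n + 1, hn (Ideal.pow_mem_pow ha _)⟩

lemma mem_span_mul_localized_of_mul_not_mem [M.IsPrime] {x y q : K}
    (hq : q ∈ dual (Submodule.span R {x, y})) (hqy : q * y ∉ toK R K M) :
    x ∈ Submodule.span R {y} * localized M.primeCompl 1 := by
  obtain ⟨c, hc⟩ := Submodule.mem_one.mp (mem_dual.mp hq y (Submodule.subset_span (by simp)))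
  have hqx := mem_dual.mp hq x (Submodule.subset_span (by simp))
  have hy0 : y ≠ 0 := right_ne_zero_of_mul fun h => hqy (h ▸ zero_mem _)
  refine Submodule.mem_span_singleton_mul.mpr
    ⟨x / y, ⟨c, fun hcM => hqy (hc ▸ algebraMap_mem_toK hcM), ?_⟩, mul_div_cancel₀ x hy0⟩
  convert hqx using 1
  rw [hc]
  field_simp

end IdealsInK

section TMaximal

variable {R K : Type*} [CommRing R] [Field K] [Algebra R K] {I J M P : Ideal R}

variable (K) in
def tClosure (I : Ideal R) : Ideal R := (tOp (toK R K I)).comap (Algebra.linearMap R K)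

lemma toK_tClosure (I : Ideal R) : toK R K (tClosure K I) = tOp (toK R K I) := by
  refine toK_comap ?_
  have h := tOp_mono (toK_le_one (K := K) I)
  rwa [tOp_one] at h

lemma le_tClosure (I : Ideal R) : I ≤ tClosure K I :=
  fun _ hr => le_tOp _ (algebraMap_mem_toK hr)

lemma isTIdeal_tClosure (I : Ideal R) : IsTIdeal K (tClosure K I) := by
  rw [IsTIdeal, toK_tClosure, tOp_tOp]

lemma isTIdeal_sSup_of_isChain {c : Set (Ideal R)} (hchain : IsChain (· ≤ ·) c)
    (hc : ∀ I ∈ c, IsTIdeal K I) : IsTIdeal K (sSup c) := by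
  have himage : toK R K (sSup c) = sSup (toK R K '' c) := by
    rw [sSup_image]
    exact (Submodule.gc_map_comap _).l_sSup
  rw [IsTIdeal, himage]
  refine tOp_sSup_of_directed ?_ (by rintro _ ⟨I, hI, rfl⟩; exact hc I hI)
  exact hchain.directedOn.mono_comp fun _ _ h => toK_mono h

lemma exists_isTMaximal_le (hJ : IsTIdeal K J) (hJtop : J ≠ ⊤) :
    ∃ M, IsTMaximal K M ∧ J ≤ M := by
  have hchain : ∀ c ⊆ {I : Ideal R | IsTIdeal K I ∧ I ≠ ⊤}, IsChain (· ≤ ·) c → ∀ I ∈ c,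
      ∃ U ∈ {I : Ideal R | IsTIdeal K I ∧ I ≠ ⊤}, ∀ I' ∈ c, I' ≤ U := by
    refine fun c hc hchain I hI => ⟨sSup c, ⟨isTIdeal_sSup_of_isChain hchain fun I hI =>
      (hc hI).1, ?_⟩, fun _ => le_sSup⟩
    rw [Ne, Ideal.eq_top_iff_one, Submodule.mem_sSup_of_directed ⟨I, hI⟩ hchain.directedOn]
    rintro ⟨I', hI', h1⟩
    exact (hc hI').2 ((Ideal.eq_top_iff_one I').mpr h1)
  obtain ⟨M, hJM, hmax⟩ := zorn_le_nonempty₀ _ hchain J ⟨hJ, hJtop⟩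
  exact ⟨M, ⟨hmax.prop.2, hmax.prop.1, fun I hI hIt hMI => le_antisymm (hmax.2 ⟨hIt, hI⟩ hMI) hMI⟩,
    hJM⟩

lemma tOp_toK_eq_one_of_forall_not_le (h : ∀ M, IsTMaximal K M → ¬ J ≤ M) :
    tOp (toK R K J) = 1 := by
  by_contra hne
  have htop : tClosure K J ≠ ⊤ := by
    intro htop
    apply hne
    rw [← toK_tClosure, htop, toK, Submodule.map_top, ← Submodule.one_eq_range]
  obtain ⟨M, hM, hle⟩ := exists_isTMaximal_le (isTIdeal_tClosure J) htop
  exact h M hM ((le_tClosure J).trans hle)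

lemma IsTMaximal.tOp_sup_span_eq_one (hM : IsTMaximal K M) {a : R} (ha : a ∉ M) :
    tOp (toK R K (M ⊔ Ideal.span {a})) = 1 :=
  tOp_toK_eq_one_of_forall_not_le fun M' hM' hle =>
    ha (hM.2.2 M' hM'.1 hM'.2.1 (le_sup_left.trans hle) ▸ hle (Ideal.mem_sup_right
      (Ideal.mem_span_singleton_self a)))

lemma tOp_toK_pow_succ (htP : IsTIdeal K P) (h : toK R K P = tOp (toK R K (P * P))) (n : ℕ) :
    tOp (toK R K (P ^ (n + 1))) = toK R K P := by
  induction n with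
  | zero => rw [zero_add, pow_one]; exact htP
  | succ n ih => rw [pow_succ, toK_mul, ← tOp_mul_tOp_left, ih, ← toK_mul, ← h]

lemma isTInvertible_of_le_of_dual_eq (hIP : I ≤ P) (hI : IsTInvertible K I)
    (h : dual (toK R K P) = dual (toK R K I)) : IsTInvertible K P :=
  le_antisymm (tOp_mul_dual_le_one _) (hI ▸ tOp_mono (mul_le_mul' (toK_mono hIP) h.ge))

end TMaximal

section FractionField

variable {R K : Type*} [CommRing R] [Field K] [Algebra R K] [IsFractionRing R K]
  {I M : Ideal R}

lemma algebraMap_mem_toK_iff {r : R} : algebraMap R K r ∈ toK R K I ↔ r ∈ I := by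
  refine ⟨?_, algebraMap_mem_toK⟩
  rintro ⟨i, hi, h⟩
  rwa [← IsFractionRing.injective R K h]

lemma IsTIdeal.eq_top_of_tOp_eq_one (hM : IsTIdeal K M) {X : Submodule R K} (hX : tOp X = 1)
    (hle : X ≤ toK R K M) : M = ⊤ := by
  have h1X : (1 : K) ∈ tOp X := hX ▸ Submodule.mem_one.mpr ⟨1, map_one _⟩
  have h1 : algebraMap R K 1 ∈ toK R K M := by
    rw [map_one, ← hM]
    exact tOp_mono hle h1X
  exact (Ideal.eq_top_iff_one M).mpr (algebraMap_mem_toK_iff.mp h1)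

lemma IsTMaximal.isPrime (hM : IsTMaximal K M) : M.IsPrime := by
  refine Ideal.isPrime_iff.mpr ⟨hM.1, fun {a b} hab => ?_⟩
  by_contra! h
  have hle : (M ⊔ Ideal.span {a}) * (M ⊔ Ideal.span {b}) ≤ M := by
    rw [Ideal.sup_mul, Ideal.mul_sup, Ideal.mul_sup, Ideal.span_singleton_mul_span_singleton]
    exact sup_le (sup_le Ideal.mul_le_right Ideal.mul_le_left)
      (sup_le Ideal.mul_le_right ((Ideal.span_singleton_le_iff_mem M).mpr hab))
  refine hM.1 (hM.2.1.eq_top_of_tOp_eq_one ?_ (toK_mono hle))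
  rw [toK_mul, ← tOp_mul_tOp_left, ← tOp_mul_tOp_right, hM.tOp_sup_span_eq_one h.1,
    hM.tOp_sup_span_eq_one h.2, mul_one, tOp_one]

end FractionField

section PVMD

variable {R K : Type*} [CommRing R] [Field K] [Algebra R K] [IsFractionRing R K]
  {B J M : Ideal R}

/-- Clearing denominators reduces `t`-invertibility of a finitely generated fractional ideal
to that of an integral one. -/
lemma IsPVMD.tOp_mul_dual_eq_one (hR : IsPVMD R K) {X : Submodule R K} (hX : X ≠ ⊥)
    (hfg : X.FG) : tOp (X * dual X) = 1 := by
  have := (algebraMap R K).domain_nontrivial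
  obtain ⟨d, hd, hdX⟩ := FractionalIdeal.isFractional_of_fg (S := nonZeroDivisors R) hfg
  have hc : algebraMap R K d ≠ 0 := IsFractionRing.to_map_ne_zero_of_mem_nonZeroDivisors hd
  set Y := Submodule.span R {algebraMap R K d} * X
  have hY1 : Y ≤ 1 := by
    intro y hy
    obtain ⟨x, hx, rfl⟩ := Submodule.mem_span_singleton_mul.mp hy
    obtain ⟨r, hr⟩ := hdX x hx
    rw [← Algebra.smul_def, ← hr]
    exact Submodule.mem_one.mpr ⟨r, rfl⟩
  have hI : toK R K (Y.comap (Algebra.linearMap R K)) = Y := toK_comap hY1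
  have hfgI : (Y.comap (Algebra.linearMap R K)).FG := by
    refine Submodule.fg_of_fg_map_injective (Algebra.linearMap R K)
      (by exact IsFractionRing.injective R K) ?_
    change (toK R K _).FG
    rw [hI]
    exact (Submodule.fg_span_singleton _).mul hfg
  have hI0 : Y.comap (Algebra.linearMap R K) ≠ ⊥ := fun h =>
    span_singleton_mul_ne_bot hc hX (by change Y = ⊥; rw [← hI, h, toK, Submodule.map_bot])
  have h := hR _ hI0 hfgI
  rwa [IsTInvertible, hI, dual_span_singleton_mul hc, mul_mul_mul_comm, Submodule.span_mul_span,
    Set.singleton_mul_singleton, mul_inv_cancel₀ hc, ← Submodule.one_eq_span, one_mul] at h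

/-- At a `t`-maximal ideal `M` of a PVMD, the localization `R_M` is a valuation domain. -/
lemma IsPVMD.mem_span_mul_localized_or (hR : IsPVMD R K) [M.IsPrime] (hM : IsTMaximal K M)
    (x y : K) :
    x ∈ Submodule.span R {y} * localized M.primeCompl 1 ∨
      y ∈ Submodule.span R {x} * localized M.primeCompl 1 := by
  obtain rfl | hx := eq_or_ne x 0
  · exact Or.inl (zero_mem _)
  have hF : Submodule.span R {x, y} ≠ ⊥ := fun h =>
    hx ((Submodule.mem_bot R).mp (h ▸ Submodule.subset_span (Set.mem_insert x {y})))
  have hFfg : (Submodule.span R {x, y}).FG := ⟨{x, y}, by simp⟩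
  obtain ⟨q, hq, hxq | hyq⟩ : ∃ q ∈ dual (Submodule.span R {x, y}),
      q * x ∉ toK R K M ∨ q * y ∉ toK R K M := by
    by_contra! h
    refine hM.1 (hM.2.1.eq_top_of_tOp_eq_one (hR.tOp_mul_dual_eq_one hF hFfg) ?_)
    refine Submodule.mul_le.mpr fun f hf q hq => ?_
    obtain ⟨a, b, rfl⟩ := Submodule.mem_span_pair.mp hf
    rw [mul_comm, mul_add, mul_smul_comm, mul_smul_comm]
    exact add_mem (Submodule.smul_mem _ a (h q hq).1) (Submodule.smul_mem _ b (h q hq).2)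
  · rw [Set.pair_comm] at hq
    exact Or.inr (mem_span_mul_localized_of_mul_not_mem hq hxq)
  · exact Or.inl (mem_span_mul_localized_of_mul_not_mem hq hyq)

lemma mem_tOp_of_forall_mem_localized {X : Submodule R K} {x : K}
    (h : ∀ (M : Ideal R) [M.IsPrime], IsTMaximal K M → x ∈ localized M.primeCompl X) :
    x ∈ tOp X := by
  have hJ : tOp (toK R K (X.colon {x})) = 1 := tOp_toK_eq_one_of_forall_not_le fun M hM hJM => by
    have := hM.isPrime
    obtain ⟨s, hs, hxs⟩ := h M hM
    exact hs (hJM (Submodule.mem_colon_singleton.mpr (by rwa [Algebra.smul_def, mul_comm])))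
  have hxJ : Submodule.span R {x} * toK R K (X.colon {x}) ≤ X := by
    refine Submodule.mul_le.mpr ?_
    rintro _ hy _ hz
    obtain ⟨a, rfl⟩ := Submodule.mem_span_singleton.mp hy
    obtain ⟨r, hr, rfl⟩ := mem_toK.mp hz
    rw [smul_mul_assoc, mul_comm, ← Algebra.smul_def]
    exact X.smul_mem a (Submodule.mem_colon_singleton.mp hr)
  have hx : x ∈ Submodule.span R {x} * tOp (toK R K (X.colon {x})) := by
    rw [hJ, mul_one]
    exact Submodule.mem_span_singleton_self x
  exact tOp_mono hxJ (mul_tOp_le _ _ hx)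

lemma IsTIdeal.le_of_forall_le_localized (hB : IsTIdeal K B)
    (h : ∀ (M : Ideal R) [M.IsPrime], IsTMaximal K M → B ≤ M →
      toK R K J ≤ localized M.primeCompl (toK R K B)) : J ≤ B := by
  intro r hr
  rw [← algebraMap_mem_toK_iff (K := K), ← hB]
  refine mem_tOp_of_forall_mem_localized fun M _ hM => ?_
  by_cases hBM : B ≤ M
  · exact h M hM hBM (algebraMap_mem_toK hr)
  obtain ⟨s, hsB, hsM⟩ := SetLike.not_le_iff_exists.mp hBM
  exact ⟨s, hsM, by rw [← map_mul]; exact algebraMap_mem_toK (B.mul_mem_left r hsB)⟩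

end PVMD

section Transforms

variable {R K : Type*} [CommRing R] [Field K] [Algebra R K] [IsFractionRing R K]
  {B I M P : Ideal R}

lemma IsPVMD.toK_le_span_mul_localized (hR : IsPVMD R K) [M.IsPrime] (hM : IsTMaximal K M)
    (hP : P.IsPrime) (hPM : P ≤ M) {t : R} (ht : t ∉ P) :
    toK R K P ≤ Submodule.span R {algebraMap R K t} * localized M.primeCompl (toK R K P) := by
  intro _ hξ
  obtain ⟨p, hp, rfl⟩ := mem_toK.mp hξ
  rcases hR.mem_span_mul_localized_or hM (algebraMap R K t) (algebraMap R K p) with htp | hpt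
  · exfalso
    obtain ⟨w, ⟨σ, hσ, hwσ⟩, hw⟩ := Submodule.mem_span_singleton_mul.mp htp
    obtain ⟨r, hr⟩ := Submodule.mem_one.mp hwσ
    have htσ : t * σ = p * r := IsFractionRing.injective R K <| by
      rw [map_mul, map_mul, hr, ← hw, mul_assoc]
    have h := hP.mem_or_mem (htσ ▸ P.mul_mem_right r hp)
    exact h.elim ht fun hσP => hσ (hPM hσP)
  · obtain ⟨w, ⟨σ, hσ, hwσ⟩, hw⟩ := Submodule.mem_span_singleton_mul.mp hpt
    obtain ⟨r, hr⟩ := Submodule.mem_one.mp hwσ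
    have htr : t * r = p * σ := IsFractionRing.injective R K <| by
      rw [map_mul, map_mul, hr, ← hw, mul_assoc]
    have hrP : r ∈ P := (hP.mem_or_mem (htr ▸ P.mul_mem_right σ hp)).resolve_left ht
    exact Submodule.mem_span_singleton_mul.mpr ⟨w, ⟨σ, hσ, hr ▸ algebraMap_mem_toK hrP⟩, hw⟩

lemma IsPVMD.radical_eq_of_not_le (hR : IsPVMD R K) (hP : P.IsPrime) (hB : IsTIdeal K B)
    (hPB : P ≤ B.radical) (hnot : ¬ P ≤ B) : B.radical = P := by
  by_contra hne
  obtain ⟨t, ⟨k, hk⟩, htP⟩ := SetLike.exists_of_lt (lt_of_le_of_ne hPB (Ne.symm hne))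
  refine hnot (hB.le_of_forall_le_localized fun M _ hM hBM => ?_)
  have hPM : P ≤ M := hPB.trans (hM.isPrime.radical_le_iff.mpr hBM)
  have hspan : Submodule.span R {algebraMap R K (t ^ k)} * toK R K P ≤ toK R K B :=
    calc Submodule.span R {algebraMap R K (t ^ k)} * toK R K P ≤ toK R K B * 1 :=
          mul_le_mul' ((Submodule.span_singleton_le_iff_mem _ _).mpr (algebraMap_mem_toK hk))
            (toK_le_one P)
      _ = toK R K B := mul_one _
  calc toK R K P
      ≤ Submodule.span R {algebraMap R K (t ^ k)} * localized M.primeCompl (toK R K P) :=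
        hR.toK_le_span_mul_localized hM hP hPM fun h => htP (hP.mem_of_pow_mem k h)
    _ ≤ localized M.primeCompl (toK R K B) := mul_localized_le.trans (localized_mono hspan)

lemma IsPVMD.mul_not_mem_mul_self (hR : IsPVMD R K) [M.IsPrime] (hM : IsTMaximal K M)
    (hP : P.IsPrime) (hPM : P ≤ M) {x : R}
    (hx : algebraMap R K x ∉ localized M.primeCompl (toK R K (P * P))) {s : R} (hs : s ∉ P) :
    x * s ∉ P * P := by
  intro hxs
  have hle : toK R K (P * P) ≤
      Submodule.span R {algebraMap R K s} * localized M.primeCompl (toK R K (P * P)) :=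
    calc toK R K (P * P) = toK R K P * toK R K P := toK_mul P P
      _ ≤ Submodule.span R {algebraMap R K s} * localized M.primeCompl (toK R K P) * toK R K P :=
        mul_le_mul_left (hR.toK_le_span_mul_localized hM hP hPM hs) _
      _ = Submodule.span R {algebraMap R K s} *
          (toK R K P * localized M.primeCompl (toK R K P)) := by ring
      _ ≤ Submodule.span R {algebraMap R K s} * localized M.primeCompl (toK R K (P * P)) := by
        rw [toK_mul]
        exact mul_le_mul_right mul_localized_le _
  obtain ⟨z, hz, hsz⟩ := Submodule.mem_span_singleton_mul.mp (hle (algebraMap_mem_toK hxs))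
  have hs0 : algebraMap R K s ≠ 0 := fun h =>
    hs (algebraMap_mem_toK_iff.mp (h ▸ zero_mem (toK R K P)))
  have hzx : z = algebraMap R K x := mul_left_cancel₀ hs0 (by rw [hsz, map_mul, mul_comm])
  exact hx (hzx ▸ hz)

lemma IsPVMD.toK_mul_self_le_span_mul_localized (hR : IsPVMD R K) [M.IsPrime]
    (hM : IsTMaximal K M) (hPM : P ≤ M) {x : R} (hx : ∀ s ∉ P, x * s ∉ P * P) :
    toK R K (P * P) ≤ Submodule.span R {algebraMap R K x} * localized M.primeCompl 1 := by
  rw [toK_mul, Submodule.mul_le]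
  intro _ hη _ hζ
  obtain ⟨p, hp, rfl⟩ := mem_toK.mp hη
  obtain ⟨q, hq, rfl⟩ := mem_toK.mp hζ
  refine (hR.mem_span_mul_localized_or hM _ (algebraMap R K x)).resolve_right fun h => ?_
  obtain ⟨w, ⟨σ, hσ, hwσ⟩, hw⟩ := Submodule.mem_span_singleton_mul.mp h
  obtain ⟨r, hr⟩ := Submodule.mem_one.mp hwσ
  have hxσ : x * σ = p * q * r := IsFractionRing.injective R K <| by
    rw [map_mul, map_mul, map_mul, hr, ← hw]
    ring
  exact hx σ (fun hσP => hσ (hPM hσP)) (hxσ ▸ Ideal.mul_mem_right _ _ (Ideal.mul_mem_mul hp hq))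

lemma IsPVMD.eq_tOp_mul_self (hR : IsPVMD R K) (hP : P.IsPrime) (htP : IsTIdeal K P)
    (hB : IsTIdeal K B) (hrad : B.radical = P) (hnot : ∀ n, ¬ P ^ (n + 1) ≤ B) :
    toK R K P = tOp (toK R K (P * P)) := by
  refine le_antisymm ?_ (htP ▸ tOp_mono (toK_mono Ideal.mul_le_left))
  intro _ hξ
  obtain ⟨x, hxP, rfl⟩ := mem_toK.mp hξ
  by_contra hx
  refine hx (mem_tOp_of_forall_mem_localized fun M₀ _ hM₀ => ?_)
  by_contra hxM₀
  have hPM₀ : P ≤ M₀ := fun σ hσ => by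
    by_contra hσM
    exact hxM₀ ⟨σ, hσM, by rw [← map_mul]; exact algebraMap_mem_toK (Ideal.mul_mem_mul hxP hσ)⟩
  have hsq := fun s (hs : s ∉ P) => hR.mul_not_mem_mul_self hM₀ hP hPM₀ hxM₀ hs
  obtain ⟨k, hk⟩ : x ∈ B.radical := hrad ▸ hxP
  refine hnot (2 * k) ((Ideal.pow_le_pow_right (Nat.le_succ _)).trans ?_)
  rw [pow_mul, sq]
  refine hB.le_of_forall_le_localized fun M _ hM hBM => ?_
  have hPM : P ≤ M := hrad ▸ hM.isPrime.radical_le_iff.mpr hBM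
  have hxk : Submodule.span R {algebraMap R K x ^ k} * 1 ≤ toK R K B := by
    rw [mul_one, ← map_pow, Submodule.span_singleton_le_iff_mem]
    exact algebraMap_mem_toK hk
  calc toK R K ((P * P) ^ k) = toK R K (P * P) ^ k := toK_pow _ _
    _ ≤ Submodule.span R {algebraMap R K x ^ k} * localized M.primeCompl 1 :=
      pow_le_span_pow_mul_localized (hR.toK_mul_self_le_span_mul_localized hM hPM hsq) k
    _ ≤ localized M.primeCompl (toK R K B) := mul_localized_le.trans (localized_mono hxk)

lemma IsPVMD.isTInvertible_denIdeal (hR : IsPVMD R K) (u : K) :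
    IsTInvertible K (denIdeal (R := R) u) := by
  have hF : Submodule.span R {1, u} ≠ ⊥ := fun h =>
    one_ne_zero ((Submodule.mem_bot R).mp (h ▸ Submodule.subset_span (Set.mem_insert 1 {u})))
  have h1 := hR.tOp_mul_dual_eq_one hF ⟨{1, u}, by simp⟩
  rw [IsTInvertible, toK_denIdeal]
  refine le_antisymm (tOp_mul_dual_le_one _) (h1.symm.le.trans (tOp_mono ?_))
  rw [mul_comm]
  exact mul_le_mul_right (le_vOp _) _

lemma IsTIdeal.eq_top_of_isTInvertible (htP : IsTIdeal K P)
    (h : toK R K P = tOp (toK R K (P * P))) (hinv : IsTInvertible K P) : P = ⊤ := by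
  have hone : toK R K P = 1 :=
    calc toK R K P = tOp (toK R K P * tOp (toK R K P * dual (toK R K P))) := by
          rw [hinv, mul_one, htP]
      _ = tOp (tOp (toK R K (P * P)) * dual (toK R K P)) := by
          rw [tOp_mul_tOp_right, tOp_mul_tOp_left, toK_mul, mul_assoc]
      _ = 1 := by rw [← h]; exact hinv
  exact htP.eq_top_of_tOp_eq_one tOp_one hone.ge

lemma exists_mem_kaplansky_not_mem_nagata (hP : P.IsPrime) (htP : IsTIdeal K P)
    (h : toK R K P = tOp (toK R K (P * P))) (hI : IsTInvertible K I) (hrad : I.radical = P) :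
    ∃ u ∈ kaplansky K P, u ∉ nagata K P := by
  have hIP : I ≤ P := hrad ▸ Ideal.le_radical
  have hlt : dual (toK R K P) < dual (toK R K I) := (dual_anti (toK_mono hIP)).lt_of_ne fun heq =>
    hP.ne_top (htP.eq_top_of_isTInvertible h (isTInvertible_of_le_of_dual_eq hIP hI heq))
  obtain ⟨u, huI, huP⟩ := SetLike.exists_of_lt hlt
  refine ⟨u, mem_kaplansky_iff.mpr (hrad ▸ Ideal.radical_mono (mem_dual_toK_iff.mp huI)),
    fun hT => huP ?_⟩
  obtain ⟨n, hn⟩ := mem_nagata_iff.mp hT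
  rw [← tOp_toK_pow_succ htP h n, dual_tOp]
  exact mem_dual_toK_iff.mpr hn

end Transforms

section Statements

variable {R : Type*} [CommRing R] [IsDomain R]
variable {K : Type*} [Field K] [Algebra R K] [IsFractionRing R K]

theorem statement_19_general (hR : IsPVMD R K) (P : Ideal R) (hP : P.IsPrime)
    (htP : IsTIdeal K P) :
    ((nagata K P : Set K) ⊂ (kaplansky K P : Set K) ↔
      toK R K P = tOp (toK R K (P * P)) ∧
        ∃ I : Ideal R, IsTInvertible K I ∧ I.radical = P) := by
  rw [Set.ssubset_iff_of_subset (nagata_subset_kaplansky P)]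
  constructor
  · rintro ⟨u, hΩ, hT⟩
    have hnot : ∀ n, ¬ P ^ (n + 1) ≤ denIdeal u := fun n hn => hT (mem_nagata_iff.mpr ⟨n, hn⟩)
    have hrad := hR.radical_eq_of_not_le hP (isTIdeal_denIdeal u) (mem_kaplansky_iff.mp hΩ)
      (by simpa only [zero_add, pow_one] using hnot 0)
    exact ⟨hR.eq_tOp_mul_self hP htP (isTIdeal_denIdeal u) hrad hnot, denIdeal u,
      hR.isTInvertible_denIdeal u, hrad⟩
  · rintro ⟨h, I, hI, hrad⟩
    exact exists_mem_kaplansky_not_mem_nagata hP htP h hI hrad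

/-- Let `R` be a PVMD and `P` a `t`-prime ideal of `R` that is not
`t`-maximal. Then `T(P) ⊊ Ω(P)` iff `P = (P²)_t` and `P = √I` for some `t`-invertible
ideal `I` of `R`. -/
theorem statement_19 (hR : IsPVMD R K) (P : Ideal R) (hbot : P ≠ ⊥) (hP : P.IsPrime)
    (htP : IsTIdeal K P) (hnmax : ¬ IsTMaximal K P) :
    ((nagata K P : Set K) ⊂ (kaplansky K P : Set K) ↔
      toK R K P = tOp (toK R K (P * P)) ∧
        ∃ I : Ideal R, IsTInvertible K I ∧ I.radical = P) :=
  statement_19_general hR P hP htP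

end Statements

end

end PVMDPaper
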